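/- arXiv:1702.05257 — 2 statements merged into one kernel-verified Lean document; each statement's English description precedes it below -/
import Mathlib

section
/- For every integer n ≥ 3 the prism GP(n,1) is highly distance-balanced. -/
open SimpleGraph

/-- The set of vertices strictly closer to `u` than to `v`. -/
def wSet {V : Type*} (G : SimpleGraph V) (u v : V) : Set V :=
  {w | G.dist u w < G.dist v w}

/-- The pair `u, v` is balanced if `|W_{uv}| = |W_{vu}|`. -/
def IsBalancedPair {V : Type*} (G : SimpleGraph V) (u v : V) : Prop :=
  (wSet G u v).ncard = (wSet G v u).ncard

/-- `G` is `ℓ`-distance-balanced if every pair of vertices at distance `ℓ` is balanced. -/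
def IsDistBalanced {V : Type*} (G : SimpleGraph V) (ℓ : ℕ) : Prop :=
  ∀ u v : V, G.dist u v = ℓ → IsBalancedPair G u v

/-- `G` is highly distance-balanced if it is `ℓ`-distance-balanced for all `1 ≤ ℓ ≤ diam`. -/
def IsHighlyDistBalanced {V : Type*} (G : SimpleGraph V) : Prop :=
  ∀ ℓ : ℕ, 1 ≤ ℓ → ℓ ≤ G.diam → IsDistBalanced G ℓ

/-- The generalized Petersen graph `GP(n,k)`: `Sum.inl i` is the outer vertex `u_i`,
`Sum.inr i` is the inner vertex `v_i`. -/
def GP (n k : ℕ) : SimpleGraph (ZMod n ⊕ ZMod n) :=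
  SimpleGraph.fromRel (fun x y =>
    match x, y with
    | Sum.inl i, Sum.inl j => j = i + 1
    | Sum.inr i, Sum.inr j => j = i + (k : ZMod n)
    | Sum.inl i, Sum.inr j => i = j
    | Sum.inr _, Sum.inl _ => False)

/-- The Cayley graph of a group with connection set `S` (intended for `S = S⁻¹`, `1 ∉ S`). -/
def cayleyGraph {A : Type*} [Group A] (S : Set A) : SimpleGraph A :=
  SimpleGraph.fromRel (fun g h => g⁻¹ * h ∈ S)

/-!
Every pair of vertices of the prism is exchanged by an automorphism: two vertices on the same
cycle by a reflection `i ↦ c - i` of both cycles, an outer and an inner vertex by such a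
reflection followed by the swap of the two cycles. An automorphism exchanging `u` and `v` maps
`W_{uv}` bijectively onto `W_{vu}`, so every pair is balanced, at every distance.
-/

namespace SimpleGraph

variable {V V' : Type*} {G : SimpleGraph V} {G' : SimpleGraph V'}

lemma Hom.dist_map_le (f : G →g G') {u v : V} (h : G.Reachable u v) :
    G'.dist (f u) (f v) ≤ G.dist u v := by
  obtain ⟨p, hp⟩ := h.exists_walk_length_eq_dist
  calc G'.dist (f u) (f v) ≤ (p.map f).length := dist_le _
    _ = G.dist u v := by rw [Walk.length_map, hp]

lemma Iso.dist_map (e : G ≃g G') (u v : V) : G'.dist (e u) (e v) = G.dist u v := by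
  by_cases h : G.Reachable u v
  · refine le_antisymm (e.toHom.dist_map_le h) ?_
    simpa using e.symm.toHom.dist_map_le (h.map e.toHom)
  · rw [dist_eq_zero_of_not_reachable h, dist_eq_zero_of_not_reachable (mt e.reachable_iff.1 h)]

lemma Iso.image_wSet (e : G ≃g G') (u v : V) : e '' wSet G u v = wSet G' (e u) (e v) := by
  ext w
  obtain ⟨x, rfl⟩ := e.surjective w
  simp only [e.injective.mem_set_image, wSet, Set.mem_ofPred_eq, e.dist_map]

lemma isBalancedPair_of_iso_swap (e : G ≃g G) {u v : V} (heu : e u = v) (hev : e v = u) :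
    IsBalancedPair G u v := by
  unfold IsBalancedPair
  rw [← Set.ncard_image_of_injective _ e.injective, e.image_wSet, heu, hev]

lemma isHighlyDistBalanced_of_forall_exists_iso_swap
    (h : ∀ u v : V, ∃ e : G ≃g G, e u = v ∧ e v = u) : IsHighlyDistBalanced G := by
  intro _ _ _ u v _
  obtain ⟨e, heu, hev⟩ := h u v
  exact isBalancedPair_of_iso_swap e heu hev

end SimpleGraph

namespace GP

variable {n : ℕ}

def reflIso (k : ℕ) (c : ZMod n) : GP n k ≃g GP n k where
  toEquiv :=
    { toFun := Sum.map (c - ·) (c - ·)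
      invFun := Sum.map (c - ·) (c - ·)
      left_inv x := by cases x <;> simp
      right_inv x := by cases x <;> simp }
  map_rel_iff' := by
    have hsub (a i j : ZMod n) : c - j = c - i + a ↔ i = j + a := by
      constructor <;> intro h <;> linear_combination h
    rintro (i | i) (j | j) <;>
      simp only [GP, Equiv.coe_fn_mk, Sum.map_inl, Sum.map_inr, fromRel_adj, ne_eq,
        Sum.inl.injEq, Sum.inr.injEq, sub_right_inj, hsub, Sum.inl_ne_inr, Sum.inr_ne_inl,
        not_false_eq_true, true_and, false_or, or_false] <;>
      tauto

@[simp] lemma reflIso_inl (k : ℕ) (c i : ZMod n) : reflIso k c (Sum.inl i) = Sum.inl (c - i) :=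
  rfl

@[simp] lemma reflIso_inr (k : ℕ) (c i : ZMod n) : reflIso k c (Sum.inr i) = Sum.inr (c - i) :=
  rfl

def swapIso : GP n 1 ≃g GP n 1 where
  toEquiv := Equiv.sumComm (ZMod n) (ZMod n)
  map_rel_iff' := by
    rintro (i | i) (j | j) <;> simp [GP, eq_comm, or_comm]

@[simp] lemma swapIso_inl (i : ZMod n) : swapIso (Sum.inl i) = (Sum.inr i : ZMod n ⊕ ZMod n) :=
  rfl

@[simp] lemma swapIso_inr (i : ZMod n) : swapIso (Sum.inr i) = (Sum.inl i : ZMod n ⊕ ZMod n) :=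
  rfl

lemma exists_iso_swap_prism (u v : ZMod n ⊕ ZMod n) :
    ∃ e : GP n 1 ≃g GP n 1, e u = v ∧ e v = u := by
  rcases u with i | i <;> rcases v with j | j
  · exact ⟨reflIso 1 (i + j), by simp, by simp⟩
  · exact ⟨swapIso.comp (reflIso 1 (i + j)), by simp [Iso.comp], by simp [Iso.comp]⟩
  · exact ⟨swapIso.comp (reflIso 1 (i + j)), by simp [Iso.comp], by simp [Iso.comp]⟩
  · exact ⟨reflIso 1 (i + j), by simp, by simp⟩

end GP

theorem statement_3_general (n : ℕ) : IsHighlyDistBalanced (GP n 1) :=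
  isHighlyDistBalanced_of_forall_exists_iso_swap GP.exists_iso_swap_prism

theorem statement_3 (n : ℕ) (hn : 3 ≤ n) : IsHighlyDistBalanced (GP n 1) :=
  statement_3_general n
end

section
/- Let Γ be a connected bipartite finite simple graph of diameter 3 with bipartition sets X and Y. Then Γ is highly distance-balanced if and only if either Γ is regular, or Γ is biregular with every vertex of X having degree |Y|/2 and every vertex of Y having degree |X|/2. -/
open SimpleGraph

/-! In a connected bipartite graph of diameter 3, the distance between two vertices is fixed by
their parts and adjacency: 2 within a part, 1 or 3 across. Hence for distinct `u, w` in one part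
`W_{uw} = {u} ∪ (N(u) \ N(w))`, so the pair is balanced iff `deg u = deg w`; for `u ∈ X, v ∈ Y`
one gets `|W_{uv}| + deg v = |X| + deg u`, so the pair is balanced iff
`|X| + 2 deg u = |Y| + 2 deg v`. Every pair of distinct vertices lies at a distance between 1 and
the diameter, so being highly distance-balanced amounts to this cross condition, which forces
constant degrees `a` on `X` and `b` on `Y`. Counting edges gives `a |X| = b |Y|`, and together with
`|X| + 2a = |Y| + 2b` this leaves exactly `|X| = |Y|, a = b` or `2a = |Y|, 2b = |X|`. -/

namespace SimpleGraph

variable {V : Type*} {G : SimpleGraph V} {X Y : Set V} {u v w : V}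

theorem IsBipartiteWith.mem_of_walk (hG : G.IsBipartiteWith X Y) (hu : u ∈ X)
    (p : G.Walk u v) : (Even p.length → v ∈ X) ∧ (Odd p.length → v ∈ Y) := by
  induction p generalizing X Y with
  | nil => simp [hu]
  | cons hadj p ih =>
    obtain ⟨hX, hY⟩ := ih hG.symm (hG.mem_of_mem_adj hu hadj)
    simp only [Walk.length_cons, Nat.even_add_one, Nat.odd_add_one, Nat.not_odd_iff_even,
      Nat.not_even_iff_odd]
    exact ⟨hY, hX⟩

theorem isHighlyDistBalanced_iff_forall_ne [Finite V] (hc : G.Connected) :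
    IsHighlyDistBalanced G ↔ ∀ u v, u ≠ v → IsBalancedPair G u v := by
  have : Nonempty V := hc.nonempty
  refine ⟨fun h u v huv => h _ (hc.pos_dist_of_ne huv)
    (dist_le_diam (connected_iff_ediam_ne_top.mp hc)) u v rfl, fun h ℓ hℓ _ u v huv => ?_⟩
  refine h u v fun hu => ?_
  subst hu
  simp only [dist_self] at huv
  omega

section DiameterThree

variable (hG : G.IsBipartiteWith X Y) (hc : G.Connected) (hd : ∀ u v, G.dist u v ≤ 3)
include hG hc hd

open Classical in
theorem IsBipartiteWith.dist_eq_ite (hu : u ∈ X) (w : V) :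
    G.dist u w = if w = u then 0 else if w ∈ X then 2 else if G.Adj u w then 1 else 3 := by
  obtain ⟨p, hp⟩ := hc.exists_walk_length_eq_dist u w
  obtain ⟨hevenX, hoddY⟩ := hG.mem_of_walk hu p
  rw [hp] at hevenX hoddY
  have := hd u w
  split_ifs with hwu hwX hadj
  · rw [hwu, dist_self]
  · have hpos := hc.pos_dist_of_ne (Ne.symm hwu)
    obtain ⟨k, hk⟩ := (Nat.even_or_odd _).resolve_right
      fun hodd => Set.disjoint_left.mp hG.disjoint hwX (hoddY hodd)
    omega
  · exact dist_eq_one_iff_adj.mpr hadj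
  · have hne := mt dist_eq_one_iff_adj.mp hadj
    obtain ⟨k, hk⟩ := (Nat.even_or_odd _).resolve_left (mt hevenX hwX)
    omega

theorem IsBipartiteWith.wSet_eq_of_mem_left_of_mem_left (hu : u ∈ X) (hw : w ∈ X)
    (huw : u ≠ w) :
    wSet G u w = insert u (G.neighborSet u \ G.neighborSet w) := by
  ext z
  have hzX : G.Adj u z → z ∉ X := fun huz hz =>
    Set.disjoint_left.mp hG.disjoint hz (hG.mem_of_mem_adj hu huz)
  simp only [wSet, Set.mem_ofPred_eq, hG.dist_eq_ite hc hd hu, hG.dist_eq_ite hc hd hw,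
    Set.mem_insert_iff, Set.mem_sdiff, mem_neighborSet]
  split_ifs <;> grind

theorem IsBipartiteWith.wSet_eq_of_mem_left_of_mem_right (hcov : X ∪ Y = Set.univ) (hu : u ∈ X)
    (hv : v ∈ Y) :
    wSet G u v = insert u (X \ G.neighborSet v) ∪ (G.neighborSet u \ {v}) := by
  ext z
  have hzXY : z ∈ X ↔ z ∉ Y := ⟨fun hz => Set.disjoint_left.mp hG.disjoint hz,
    (Set.eq_univ_iff_forall.mp hcov z).resolve_right⟩
  have huz : G.Adj u z → z ∈ Y := hG.mem_of_mem_adj hu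
  have hvz : G.Adj v z → z ∈ X := hG.symm.mem_of_mem_adj hv
  simp only [wSet, Set.mem_ofPred_eq, hG.dist_eq_ite hc hd hu, hG.symm.dist_eq_ite hc hd hv,
    Set.mem_union, Set.mem_insert_iff, Set.mem_sdiff, Set.mem_singleton_iff, mem_neighborSet]
  split_ifs <;> grind

theorem IsBipartiteWith.isBalancedPair_iff_of_mem_left_of_mem_left [Finite V] (hu : u ∈ X)
    (hw : w ∈ X) (huw : u ≠ w) :
    IsBalancedPair G u w ↔ (G.neighborSet u).ncard = (G.neighborSet w).ncard := by
  rw [IsBalancedPair, hG.wSet_eq_of_mem_left_of_mem_left hc hd hu hw huw,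
    hG.wSet_eq_of_mem_left_of_mem_left hc hd hw hu huw.symm,
    Set.ncard_insert_of_notMem fun h => G.irrefl h.1,
    Set.ncard_insert_of_notMem fun h => G.irrefl h.1,
    Nat.add_right_cancel_iff]
  exact (Set.ncard_eq_ncard_iff_ncard_sdiff_eq_ncard_sdiff).symm

theorem IsBipartiteWith.ncard_wSet_add_ncard_neighborSet [Finite V] (hcov : X ∪ Y = Set.univ)
    (hu : u ∈ X) (hv : v ∈ Y) :
    (wSet G u v).ncard + (G.neighborSet v).ncard = X.ncard + (G.neighborSet u).ncard := by
  have hNu : G.neighborSet u ⊆ Y := isBipartiteWith_neighborSet_subset hG hu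
  have hNv : G.neighborSet v ⊆ X := isBipartiteWith_neighborSet_subset' hG hv
  have hX := Set.ncard_sdiff_add_ncard_of_subset hNv
  rw [hG.wSet_eq_of_mem_left_of_mem_right hc hd hcov hu hv, Set.ncard_union_eq
    (hG.disjoint.mono (Set.insert_subset hu Set.sdiff_subset) (Set.sdiff_subset.trans hNu))]
  by_cases hadj : G.Adj u v
  · have := Set.ncard_sdiff_singleton_add_one (show v ∈ G.neighborSet u from hadj)
    rw [Set.ncard_insert_of_notMem fun h => h.2 hadj.symm]
    omega
  · rw [Set.insert_eq_of_mem (show u ∈ X \ G.neighborSet v from ⟨hu, fun h => hadj h.symm⟩),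
      Set.sdiff_singleton_eq_self (show v ∉ G.neighborSet u from hadj)]
    omega

theorem IsBipartiteWith.isBalancedPair_iff_of_mem_left_of_mem_right [Finite V]
    (hcov : X ∪ Y = Set.univ) (hu : u ∈ X) (hv : v ∈ Y) :
    IsBalancedPair G u v ↔
      X.ncard + 2 * (G.neighborSet u).ncard = Y.ncard + 2 * (G.neighborSet v).ncard := by
  have huv := hG.ncard_wSet_add_ncard_neighborSet hc hd hcov hu hv
  have hvu := hG.symm.ncard_wSet_add_ncard_neighborSet hc hd (Set.union_comm X Y ▸ hcov) hv hu
  rw [IsBalancedPair]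
  omega

theorem IsBipartiteWith.isHighlyDistBalanced_iff [Finite V] (hcov : X ∪ Y = Set.univ)
    {x y : V} (hx : x ∈ X) (hy : y ∈ Y) :
    IsHighlyDistBalanced G ↔ ∀ u ∈ X, ∀ v ∈ Y,
      X.ncard + 2 * (G.neighborSet u).ncard = Y.ncard + 2 * (G.neighborSet v).ncard := by
  rw [isHighlyDistBalanced_iff_forall_ne hc]
  refine ⟨fun h u hu v hv => ?_, fun h u w huw => ?_⟩
  · exact (hG.isBalancedPair_iff_of_mem_left_of_mem_right hc hd hcov hu hv).mp
      (h u v fun huv => Set.disjoint_left.mp hG.disjoint hu (huv ▸ hv))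
  have hcov' : ∀ z, z ∈ X ∨ z ∈ Y := fun z => Set.eq_univ_iff_forall.mp hcov z
  rcases hcov' u with hu | hu <;> rcases hcov' w with hw | hw
  · have := h u hu y hy
    have := h w hw y hy
    exact (hG.isBalancedPair_iff_of_mem_left_of_mem_left hc hd hu hw huw).mpr (by omega)
  · exact (hG.isBalancedPair_iff_of_mem_left_of_mem_right hc hd hcov hu hw).mpr (h u hu w hw)
  · exact ((hG.isBalancedPair_iff_of_mem_left_of_mem_right hc hd hcov hw hu).mpr
      (h w hw u hu)).symm
  · have := h x hx u hu
    have := h x hx w hw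
    exact (hG.symm.isBalancedPair_iff_of_mem_left_of_mem_left hc hd hu hw huw).mpr (by omega)

end DiameterThree

theorem IsBipartiteWith.mul_ncard_eq_mul_ncard [Finite V] (hG : G.IsBipartiteWith X Y) {a b : ℕ}
    (hX : ∀ u ∈ X, (G.neighborSet u).ncard = a) (hY : ∀ v ∈ Y, (G.neighborSet v).ncard = b) :
    a * X.ncard = b * Y.ncard := by
  classical
  have := Fintype.ofFinite V
  have hsum := isBipartiteWith_sum_degrees_eq (G := G) (s := X.toFinset) (t := Y.toFinset)
    (by simpa using hG)
  simp only [← card_neighborSet_eq_degree, ← Nat.card_eq_fintype_card,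
    Nat.card_coe_set_eq] at hsum
  rw [Finset.sum_congr rfl fun u hu => hX u (Set.mem_toFinset.mp hu),
    Finset.sum_congr rfl fun v hv => hY v (Set.mem_toFinset.mp hv)] at hsum
  simpa [Set.ncard_eq_toFinset_card', mul_comm] using hsum

end SimpleGraph

theorem eq_and_eq_or_two_mul_eq_of_mul_eq_of_add_eq {m n a b : ℕ} (hmul : a * m = b * n)
    (hadd : m + 2 * a = n + 2 * b) : m = n ∧ a = b ∨ m ≠ n ∧ 2 * a = n ∧ 2 * b = m := by
  by_cases hmn : m = n
  · exact .inl ⟨hmn, by omega⟩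
  have hfactor : ((m : ℤ) - 2 * b) * ((n : ℤ) - m) = 0 := by
    linear_combination (2 : ℤ) * (by exact_mod_cast hmul : (a : ℤ) * m = b * n) -
      (m : ℤ) * (by exact_mod_cast hadd : (m : ℤ) + 2 * a = n + 2 * b)
  have hsub : (m : ℤ) - 2 * b = 0 := (mul_eq_zero.mp hfactor).resolve_right (by omega)
  omega

theorem statement_13 {V : Type*} [Fintype V] (G : SimpleGraph V) (hc : G.Connected)
    (hdiam : G.diam = 3) (X Y : Set V)
    (hunion : X ∪ Y = Set.univ) (hdisj : Disjoint X Y)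
    (hbip : ∀ u v : V, G.Adj u v → ((u ∈ X ∧ v ∈ Y) ∨ (u ∈ Y ∧ v ∈ X))) :
    IsHighlyDistBalanced G ↔
      ((∃ r : ℕ, ∀ v : V, (G.neighborSet v).ncard = r) ∨
       (X.ncard ≠ Y.ncard ∧
        (∀ u ∈ X, 2 * (G.neighborSet u).ncard = Y.ncard) ∧
        (∀ v ∈ Y, 2 * (G.neighborSet v).ncard = X.ncard))) := by
  have hG : G.IsBipartiteWith X Y := ⟨hdisj, fun u v => hbip u v⟩
  have hd : ∀ u v, G.dist u v ≤ 3 := fun u v =>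
    hdiam ▸ dist_le_diam (ediam_ne_top_of_diam_ne_zero (by omega))
  obtain ⟨x, y, hx, hy, hxy⟩ : ∃ x y, x ∈ X ∧ y ∈ Y ∧ G.Adj x y := by
    have := nontrivial_of_diam_ne_zero (G := G) (by omega)
    obtain ⟨z⟩ := hc.nonempty
    obtain ⟨z', hzz'⟩ := hc.preconnected.exists_adj_of_nontrivial z
    rcases hbip z z' hzz' with ⟨hz, hz'⟩ | ⟨hz, hz'⟩
    exacts [⟨z, z', hz, hz', hzz'⟩, ⟨z', z, hz', hz, hzz'.symm⟩]
  rw [hG.isHighlyDistBalanced_iff hc hd hunion hx hy]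
  constructor
  · intro h
    have hX : ∀ u ∈ X, (G.neighborSet u).ncard = (G.neighborSet x).ncard := fun u hu => by
      have := h u hu y hy; have := h x hx y hy; omega
    have hY : ∀ v ∈ Y, (G.neighborSet v).ncard = (G.neighborSet y).ncard := fun v hv => by
      have := h x hx v hv; have := h x hx y hy; omega
    rcases eq_and_eq_or_two_mul_eq_of_mul_eq_of_add_eq (hG.mul_ncard_eq_mul_ncard hX hY)
      (h x hx y hy) with ⟨-, hdeg⟩ | ⟨hne, hXY, hYX⟩
    · refine .inl ⟨(G.neighborSet x).ncard, fun v => ?_⟩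
      rcases Set.eq_univ_iff_forall.mp hunion v with hv | hv
      exacts [hX v hv, (hY v hv).trans hdeg.symm]
    · exact .inr ⟨hne, fun u hu => hX u hu ▸ hXY, fun v hv => hY v hv ▸ hYX⟩
  · rintro (⟨r, hr⟩ | ⟨-, hX, hY⟩) u hu v hv
    · have hr0 : 0 < r := hr x ▸ (Set.ncard_pos (Set.toFinite _)).mpr ⟨y, hxy⟩
      have := hG.mul_ncard_eq_mul_ncard (fun u _ => hr u) (fun v _ => hr v)
      rw [hr u, hr v, Nat.eq_of_mul_eq_mul_left hr0 this]
    · have := hX u hu; have := hY v hv; omega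
end
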